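/- Let (G,m) be a summable weighted graph. For A ⊆ V set R_A = (∑_{(u,v) ∈ A×A} m(u,v))/m(A) (i.e. R_A = 2·m(A,A)/m(A), where m(A,A) is the total weight of edges with both endpoints in A). Then for any partition V = A ⊔ B into nonempty sets one has min{R_A, R_B} ≤ 1 − h̄(A,B) ≤ max{R_A, R_B} ≤ κ(A,B). -/

import Mathlib

open MeasureTheory

/-- A summable weighted graph on a vertex set `V`. -/
structure SummableWeightedGraph (V : Type*) where
  m : V → V → ℝ
  symm : ∀ u v, m u v = m v u
  nonneg : ∀ u v, 0 ≤ m u v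
  loopless : ∀ v, m v v = 0
  summable : Summable fun p : V × V => m p.1 p.2
  noIsolated : ∀ v, 0 < ∑' u, m v u

namespace SummableWeightedGraph

variable {V : Type*} (G : SummableWeightedGraph V)

/-- The weight of a vertex. -/
noncomputable def deg (v : V) : ℝ := ∑' u, G.m v u

/-- The weight of a set of vertices. -/
noncomputable def setWeight (S : Set V) : ℝ := ∑' v : S, G.deg v

/-- The weight of the boundary of a set of vertices. -/
noncomputable def boundaryWeight (S : Set V) : ℝ :=
  ∑' p : ↥S × ↥Sᶜ, G.m p.1 p.2

/-- The Cheeger constant. -/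
noncomputable def cheegerConst : ℝ :=
  sInf { r : ℝ | ∃ S : Set V, S.Nonempty ∧ G.setWeight S ≤ G.setWeight Sᶜ ∧
    r = G.boundaryWeight S / G.setWeight S }

/-- The weighted counting measure on vertices. -/
noncomputable def measure [MeasurableSpace V] : Measure V :=
  Measure.sum fun v => ENNReal.ofReal (G.deg v) • Measure.dirac v

/-- The normalised Laplacian, characterised by its pointwise formula. -/
def IsLaplacian [MeasurableSpace V]
    (L : Lp ℝ 2 G.measure →L[ℝ] Lp ℝ 2 G.measure) : Prop :=
  ∀ f : Lp ℝ 2 G.measure, ∀ᵐ v ∂G.measure,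
    L f v = f v - (G.deg v)⁻¹ * ∑' u, G.m v u * f u

end SummableWeightedGraph

namespace SummableWeightedGraph

variable {V : Type*} (G : SummableWeightedGraph V)

/-- Total weight `m(A,B)` of the edges joining `A` to `B`. -/
noncomputable def pairWeight (A B : Set V) : ℝ := ∑' q : ↥A × ↥B, G.m q.1 q.2

/-- The dual Cheeger ratio of a pair of disjoint nonempty sets of vertices. -/
noncomputable def dualCheegerRatio (A B : Set V) : ℝ :=
  2 * G.pairWeight A B / (G.setWeight A + G.setWeight B)

/-- The dual Cheeger constant. -/
noncomputable def dualCheegerConst : ℝ :=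
  sSup { r : ℝ | ∃ A B : Set V, A.Nonempty ∧ B.Nonempty ∧ Disjoint A B ∧
    r = G.dualCheegerRatio A B }

end SummableWeightedGraph

namespace SummableWeightedGraph

variable {V : Type*} (G : SummableWeightedGraph V)

/-- `p_S(v)`, the probability that the random walk moves from `v` into `S` in one step. -/
noncomputable def pProb (S : Set V) (v : V) : ℝ := (∑' u : S, G.m v u) / G.deg v

/-- `κ(A,B)` for a partition `V = A ⊔ B` into nonempty sets. -/
noncomputable def kappaPair (A B : Set V) : ℝ :=
  max (⨆ v : A, G.pProb A v) (⨆ w : B, G.pProb B w)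

/-- The invariant `κ(G,m)`. -/
noncomputable def kappa : ℝ :=
  sInf { r : ℝ | ∃ A B : Set V, A.Nonempty ∧ B.Nonempty ∧ Disjoint A B ∧
    A ∪ B = Set.univ ∧ r = G.kappaPair A B }

end SummableWeightedGraph

/-!
Writing `a = m(A)`, `b = m(B)`, every edge at a vertex of `A` ends in `A` or in `B`, so
`a = m(A,A) + m(A,B)` and `b = m(B,B) + m(A,B)`. Hence `1 - h̄(A,B) = (m(A,A) + m(B,B)) / (a + b)`
is the mediant of `R_A = m(A,A)/a` and `R_B = m(B,B)/b` and lies between them. Finally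
`m(A,A) = ∑_{v ∈ A} p_A(v) m(v) ≤ (sup_A p_A) · m(A)`, so `R_A ≤ sup_A p_A`, and likewise for `B`.
-/

section Mediant

variable {K : Type*} [Field K] [LinearOrder K] [IsStrictOrderedRing K] {x y a b : K}

lemma min_div_le_add_div_add (ha : 0 < a) (hb : 0 < b) :
    min (x / a) (y / b) ≤ (x + y) / (a + b) := by
  rw [le_div_iff₀ (add_pos ha hb), mul_add]
  exact add_le_add ((le_div_iff₀ ha).mp (min_le_left _ _))
    ((le_div_iff₀ hb).mp (min_le_right _ _))

lemma add_div_add_le_max (ha : 0 < a) (hb : 0 < b) :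
    (x + y) / (a + b) ≤ max (x / a) (y / b) := by
  rw [div_le_iff₀ (add_pos ha hb), mul_add]
  exact add_le_add ((div_le_iff₀ ha).mp (le_max_left _ _))
    ((div_le_iff₀ hb).mp (le_max_right _ _))

end Mediant

namespace SummableWeightedGraph

variable {V : Type*} (G : SummableWeightedGraph V)

lemma summable_m (v : V) : Summable (G.m v) :=
  G.summable.prod_factor v

lemma summable_m_prod (A B : Set V) : Summable fun q : ↥A × ↥B => G.m q.1 q.2 :=
  G.summable.comp_injective (Subtype.val_injective.prodMap Subtype.val_injective)

lemma summable_tsum_m (A B : Set V) : Summable fun v : A => ∑' u : B, G.m v u :=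
  ((summable_prod_of_nonneg fun _ => G.nonneg _ _).mp (G.summable_m_prod A B)).2

lemma summable_deg : Summable G.deg :=
  ((summable_prod_of_nonneg fun _ => G.nonneg _ _).mp G.summable).2

lemma deg_pos (v : V) : 0 < G.deg v := G.noIsolated v

lemma setWeight_nonneg (A : Set V) : 0 ≤ G.setWeight A :=
  tsum_nonneg fun v => (G.deg_pos v).le

lemma setWeight_pos {A : Set V} (hA : A.Nonempty) : 0 < G.setWeight A :=
  (G.summable_deg.subtype A).tsum_pos (fun v : A => (G.deg_pos v).le) ⟨hA.some, hA.some_mem⟩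
    (G.deg_pos hA.some)

lemma pairWeight_eq_tsum_tsum (A B : Set V) :
    G.pairWeight A B = ∑' v : A, ∑' u : B, G.m v u :=
  (G.summable_m_prod A B).tsum_prod' fun v => (G.summable_m v).subtype B

lemma pairWeight_comm (A B : Set V) : G.pairWeight A B = G.pairWeight B A :=
  calc G.pairWeight A B
      = ∑' q : ↥A × ↥B, (fun p : ↥B × ↥A => G.m p.1 p.2) (Equiv.prodComm ↥A ↥B q) :=
        tsum_congr fun q => G.symm q.1 q.2
    _ = G.pairWeight B A := (Equiv.prodComm ↥A ↥B).tsum_eq fun p : ↥B × ↥A => G.m p.1 p.2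

lemma setWeight_eq_pairWeight_add_pairWeight_compl (A : Set V) :
    G.setWeight A = G.pairWeight A A + G.pairWeight A Aᶜ := by
  rw [G.pairWeight_eq_tsum_tsum, G.pairWeight_eq_tsum_tsum,
    ← (G.summable_tsum_m A A).tsum_add (G.summable_tsum_m A Aᶜ)]
  exact tsum_congr fun v => ((G.summable_m v).tsum_subtype_add_tsum_subtype_compl A).symm

lemma one_sub_dualCheegerRatio_eq {A B : Set V} (hAB : IsCompl A B) (hA : A.Nonempty) :
    1 - G.dualCheegerRatio A B =
      (G.pairWeight A A + G.pairWeight B B) / (G.setWeight A + G.setWeight B) := by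
  have hsum : G.setWeight A + G.setWeight B ≠ 0 :=
    (add_pos_of_pos_of_nonneg (G.setWeight_pos hA) (G.setWeight_nonneg B)).ne'
  have hmA : G.setWeight A = G.pairWeight A A + G.pairWeight A B := by
    rw [G.setWeight_eq_pairWeight_add_pairWeight_compl, hAB.compl_eq]
  have hmB : G.setWeight B = G.pairWeight B B + G.pairWeight A B := by
    rw [G.setWeight_eq_pairWeight_add_pairWeight_compl, hAB.symm.compl_eq, G.pairWeight_comm B A]
  rw [dualCheegerRatio, eq_div_iff hsum, sub_mul, div_mul_cancel₀ _ hsum, hmA, hmB]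
  ring

lemma pProb_nonneg (S : Set V) (v : V) : 0 ≤ G.pProb S v :=
  div_nonneg (tsum_nonneg fun _ => G.nonneg _ _) (G.deg_pos v).le

lemma pProb_le_one (S : Set V) (v : V) : G.pProb S v ≤ 1 := by
  rw [pProb, div_le_one (G.deg_pos v)]
  exact (G.summable_m v).tsum_subtype_le _ S fun _ => G.nonneg _ _

lemma pairWeight_le_iSup_pProb_mul_setWeight (A S : Set V) :
    G.pairWeight A S ≤ (⨆ v : A, G.pProb S v) * G.setWeight A := by
  have hbdd : BddAbove (Set.range fun v : A => G.pProb S v) :=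
    ⟨1, by rintro _ ⟨v, rfl⟩; exact G.pProb_le_one S v⟩
  have hpm (v : A) : G.pProb S v * G.deg v = ∑' u : S, G.m v u :=
    div_mul_cancel₀ _ (G.deg_pos v).ne'
  calc G.pairWeight A S = ∑' v : A, G.pProb S v * G.deg v := by
        rw [G.pairWeight_eq_tsum_tsum]; exact tsum_congr fun v => (hpm v).symm
    _ ≤ ∑' v : A, (⨆ v : A, G.pProb S v) * G.deg v :=
        Summable.tsum_le_tsum
          (fun v => mul_le_mul_of_nonneg_right (le_ciSup hbdd v) (G.deg_pos v).le)
          ((G.summable_tsum_m A S).congr fun v => (hpm v).symm)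
          ((G.summable_deg.subtype A).mul_left _)
    _ = (⨆ v : A, G.pProb S v) * G.setWeight A := tsum_mul_left

lemma pairWeight_div_setWeight_le_iSup_pProb (A S : Set V) :
    G.pairWeight A S / G.setWeight A ≤ ⨆ v : A, G.pProb S v := by
  rcases (G.setWeight_nonneg A).eq_or_lt with hzero | hpos
  · rw [← hzero, div_zero]
    exact Real.iSup_nonneg fun v => G.pProb_nonneg S v
  · exact (div_le_iff₀ hpos).mpr (G.pairWeight_le_iSup_pProb_mul_setWeight A S)

end SummableWeightedGraph

open SummableWeightedGraph in
theorem RA_RB_dualCheeger_kappa_general {V : Type*} (G : SummableWeightedGraph V)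
    (A B : Set V) (hA : A.Nonempty) (hB : B.Nonempty) (hdisj : Disjoint A B)
    (hcover : A ∪ B = Set.univ) :
    min (G.pairWeight A A / G.setWeight A) (G.pairWeight B B / G.setWeight B)
        ≤ 1 - G.dualCheegerRatio A B ∧
    1 - G.dualCheegerRatio A B
        ≤ max (G.pairWeight A A / G.setWeight A) (G.pairWeight B B / G.setWeight B) ∧
    max (G.pairWeight A A / G.setWeight A) (G.pairWeight B B / G.setWeight B)
        ≤ G.kappaPair A B := by
  have hAB : IsCompl A B := ⟨hdisj, codisjoint_iff.mpr hcover⟩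
  rw [G.one_sub_dualCheegerRatio_eq hAB hA]
  exact ⟨min_div_le_add_div_add (G.setWeight_pos hA) (G.setWeight_pos hB),
    add_div_add_le_max (G.setWeight_pos hA) (G.setWeight_pos hB),
    max_le_max (G.pairWeight_div_setWeight_le_iSup_pProb A A)
      (G.pairWeight_div_setWeight_le_iSup_pProb B B)⟩

open SummableWeightedGraph in
/-- `min{R_A, R_B} ≤ 1 - h̄(A,B) ≤ max{R_A, R_B} ≤ κ(A,B)` for any
partition `V = A ⊔ B` into nonempty sets. -/
theorem RA_RB_dualCheeger_kappa {V : Type*} [Countable V] (G : SummableWeightedGraph V)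
    (A B : Set V) (hA : A.Nonempty) (hB : B.Nonempty) (hdisj : Disjoint A B)
    (hcover : A ∪ B = Set.univ) :
    min (G.pairWeight A A / G.setWeight A) (G.pairWeight B B / G.setWeight B)
        ≤ 1 - G.dualCheegerRatio A B ∧
    1 - G.dualCheegerRatio A B
        ≤ max (G.pairWeight A A / G.setWeight A) (G.pairWeight B B / G.setWeight B) ∧
    max (G.pairWeight A A / G.setWeight A) (G.pairWeight B B / G.setWeight B)
        ≤ G.kappaPair A B :=
  RA_RB_dualCheeger_kappa_general G A B hA hB hdisj hcover
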